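/- Correctness of the pruning procedure (Theorem A.3 of the paper, set form): for finite sets of tokens A, B, G with A ⊆ B, A nonempty, G nonempty, and A ∩ G nonempty, the F1 score of A against ground truth G is at most the upper bound computed from B; that is, F1(A, G) ≤ 2·recall(B, G) / (1 + recall(B, G)). (Since any extension of a sub-program produces a token output contained in that of the sub-program, no extension of a sub-program whose upper bound is below the current optimum can achieve an F1 score above that optimum.) -/

import Mathlib

open Finset

/-!
Writing `i = |A ∩ G|`, `j = |B ∩ G|`, the F1 score is the harmonic mean `2i / (|A| + |G|)` and the
upper bound is `2j / (|G| + j)`. Since `i ≤ |A|`, the F1 score is at most `2i / (i + |G|)`, and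
`x ↦ x / (x + |G|)` is monotone while `i ≤ j` because `A ⊆ B`.
-/

lemma f1_eq_two_mul_div_add {K : Type*} [Field K] {i a g : K} (ha : a ≠ 0) (hg : g ≠ 0) :
    2 * (i / a) * (i / g) / (i / a + i / g) = 2 * i / (a + g) := by
  rcases eq_or_ne i 0 with rfl | hi
  · simp
  have hnum : 2 * (i / a) * (i / g) = i * (2 * i) / (a * g) := by field_simp
  have hden : i / a + i / g = i * (a + g) / (a * g) := by field_simp; ring
  rw [hnum, hden, div_div_div_cancel_right₀ (mul_ne_zero ha hg), mul_div_mul_left _ _ hi]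

lemma ub_eq_two_mul_div_add {K : Type*} [Field K] {j g : K} (hg : g ≠ 0) :
    2 * (j / g) / (1 + j / g) = 2 * j / (g + j) := by
  rw [one_add_div hg, ← mul_div_assoc, div_div_div_cancel_right₀ hg]

section LinearOrderedField

variable {K : Type*} [Field K] [LinearOrder K] [IsStrictOrderedRing K]

lemma div_add_le_div_add {i j g : K} (hi : 0 ≤ i) (hij : i ≤ j) (hg : 0 < g) :
    i / (i + g) ≤ j / (j + g) := by
  rw [div_le_div_iff₀ (by positivity) (by linarith)]
  nlinarith

lemma two_mul_div_add_le_two_mul_div_add {i a j g : K} (hi : 0 ≤ i) (hia : i ≤ a) (hij : i ≤ j)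
    (hg : 0 < g) : 2 * i / (a + g) ≤ 2 * j / (g + j) :=
  calc 2 * i / (a + g) ≤ 2 * i / (i + g) := by gcongr
    _ = 2 * (i / (i + g)) := mul_div_assoc _ _ _
    _ ≤ 2 * (j / (j + g)) :=
      mul_le_mul_of_nonneg_left (div_add_le_div_add hi hij hg) zero_le_two
    _ = 2 * j / (g + j) := by rw [add_comm j, mul_div_assoc]

end LinearOrderedField

theorem f1_le_ub_superset_general {α : Type*} [DecidableEq α] (A B G : Finset α)
    (hAB : A ⊆ B) (hAG : (A ∩ G).Nonempty) :
    2 * (((A ∩ G).card : ℝ) / (A.card : ℝ)) * (((A ∩ G).card : ℝ) / (G.card : ℝ)) /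
        (((A ∩ G).card : ℝ) / (A.card : ℝ) + ((A ∩ G).card : ℝ) / (G.card : ℝ))
      ≤ 2 * (((B ∩ G).card : ℝ) / (G.card : ℝ)) /
          (1 + ((B ∩ G).card : ℝ) / (G.card : ℝ)) := by
  have hA : (0 : ℝ) < A.card := by exact_mod_cast (hAG.mono inter_subset_left).card_pos
  have hG : (0 : ℝ) < G.card := by exact_mod_cast (hAG.mono inter_subset_right).card_pos
  rw [f1_eq_two_mul_div_add hA.ne' hG.ne', ub_eq_two_mul_div_add hG.ne']
  exact two_mul_div_add_le_two_mul_div_add (by positivity)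
    (by exact_mod_cast card_le_card inter_subset_left)
    (by exact_mod_cast card_le_card (inter_subset_inter_right hAB)) hG

/-- Correctness of the pruning procedure (Theorem A.3, set form): for finite
token sets `A ⊆ B` with `A`, `G`, and `A ∩ G` nonempty, the F1 score of `A`
against ground truth `G` is at most the upper bound computed from `B`:
`F1(A, G) ≤ 2·recall(B, G) / (1 + recall(B, G))`, where
`precision(A,G) = |A ∩ G| / |A|` and `recall(X,G) = |X ∩ G| / |G|`. -/
theorem f1_le_ub_superset {α : Type*} [DecidableEq α] (A B G : Finset α)
    (hAB : A ⊆ B) (hA : A.Nonempty) (hG : G.Nonempty) (hAG : (A ∩ G).Nonempty) :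
    2 * (((A ∩ G).card : ℝ) / (A.card : ℝ)) * (((A ∩ G).card : ℝ) / (G.card : ℝ)) /
        (((A ∩ G).card : ℝ) / (A.card : ℝ) + ((A ∩ G).card : ℝ) / (G.card : ℝ))
      ≤ 2 * (((B ∩ G).card : ℝ) / (G.card : ℝ)) /
          (1 + ((B ∩ G).card : ℝ) / (G.card : ℝ)) :=
  f1_le_ub_superset_general A B G hAB hAG
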